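/- Let G be a graph, v an outer vertex of G, and e an inner edge of G not adjacent to v. Then (G/v)/e = (G/e)/v, and the mixed square commutes: δ^v ∘ δ^e = δ^e ∘ δ^v as graphical maps (G/v)/e → G. -/

import Mathlib

/-!  A formalization of the graphical category of finite (connected) multigraphs
with legs, loops and parallel edges, following the half-edge encoding:
a graph is given by a finite set of vertices, a finite set of half-edges,
an involution pairing the two halves of an edge (legs and free edges have a
fixed or unattached half), and an attachment map.  Graphical maps are encoded
by their action on (half-)edges together with the assignment of an embedded
subgraph (given by its vertex set and its ι-closed set of half-edges) to each
vertex; `PreGMap.EqOn G f g` is equality of graphical maps out of `G`. -/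

structure HGraph where
  V : Finset ℕ
  H : Finset ℕ
  ι : ℕ → ℕ
  att : ℕ → Option ℕ

namespace HGraph

/-- Two vertices are adjacent when some edge joins them. -/
def Adj (G : HGraph) (v w : ℕ) : Prop :=
  ∃ h ∈ G.H, G.att h = some v ∧ G.att (G.ι h) = some w

/-- Connectedness of a graph. -/
def Connected (G : HGraph) : Prop :=
  ∀ v ∈ G.V, ∀ w ∈ G.V, Relation.ReflTransGen G.Adj v w

/-- Well-formedness: the involution and the attachment are internal to the
graph, and the graph is connected (graphs are finite connected multigraphs). -/
def Wf (G : HGraph) : Prop :=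
  (∀ h ∈ G.H, G.ι h ∈ G.H) ∧
  (∀ h ∈ G.H, G.ι (G.ι h) = h) ∧
  (∀ h ∈ G.H, ∀ v, G.att h = some v → v ∈ G.V) ∧
  G.Connected

/-- `h` is (a half of) an inner edge: both ends are attached to vertices. -/
def IsInnerEdge (G : HGraph) (h : ℕ) : Prop :=
  h ∈ G.H ∧ h ≠ G.ι h ∧ (G.att h).isSome ∧ (G.att (G.ι h)).isSome

/-- `h` is (a half of) a loop: an edge from a vertex to itself. -/
def IsLoop (G : HGraph) (h : ℕ) : Prop :=
  h ∈ G.H ∧ h ≠ G.ι h ∧ ∃ v, G.att h = some v ∧ G.att (G.ι h) = some v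

/-- The number of non-leg edges incident to `v` (a loop counts once). -/
def nonLegEdgeCount (G : HGraph) (v : ℕ) : ℕ :=
  (G.H.filter fun h => G.att h = some v ∧ (G.att (G.ι h)).isSome ∧ G.att (G.ι h) ≠ some v).card +
  (G.H.filter fun h => G.att h = some v ∧ G.att (G.ι h) = some v ∧ h ≠ G.ι h).card / 2

/-- An outer vertex: at most one incident non-leg edge. -/
def IsOuterVertex (G : HGraph) (v : ℕ) : Prop :=
  v ∈ G.V ∧ G.nonLegEdgeCount v ≤ 1

/-- The corolla at `v`, as an embedded subgraph (vertex set and half-edges). -/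
def corolla (G : HGraph) (v : ℕ) : Finset ℕ × Finset ℕ :=
  ({v}, G.H.filter fun h => G.att h = some v ∨ G.att (G.ι h) = some v)

/-- `G/b`: contract the (non-loop) inner edge `b`, merging its two endpoints
into the single vertex `min x y`. -/
def contract (G : HGraph) (b : ℕ) : HGraph :=
  let x := (G.att b).getD 0
  let y := (G.att (G.ι b)).getD 0
  let z := min x y
  let H' := G.H.filter fun h => h ≠ b ∧ h ≠ G.ι b
  { V := insert z ((G.V.erase x).erase y)
    H := H'
    ι := fun h => if h ∈ H' then G.ι h else h
    att := fun h => if h ∈ H' then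
        (if G.att h = some x ∨ G.att h = some y then some z else G.att h) else none }

/-- `G/v`: delete the (outer) vertex `v` together with its legs and loops;
edges joining `v` to other vertices become legs. -/
def delVertex (G : HGraph) (v : ℕ) : HGraph :=
  let H' := G.H.filter fun h =>
    ¬ ((G.att h = some v ∨ G.att (G.ι h) = some v) ∧
       (G.att h = some v ∨ G.att h = none) ∧
       (G.att (G.ι h) = some v ∨ G.att (G.ι h) = none))
  { V := G.V.erase v
    H := H'
    ι := fun h => if h ∈ H' then G.ι h else h
    att := fun h => if h ∈ H' then (if G.att h = some v then none else G.att h) else none }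

/-- `G/ℓ`: snip the loop (or cut the edge) `l` into two legs, with fresh
half-edges `a` and `b` as the new free ends. -/
def snip (G : HGraph) (l a b : ℕ) : HGraph :=
  let H' := insert a (insert b G.H)
  { V := G.V
    H := H'
    ι := fun h => if h ∈ H' then
        (if h = l then a else if h = a then l else
         if h = G.ι l then b else if h = b then G.ι l else G.ι h) else h
    att := fun h => if h ∈ H' then (if h = a ∨ h = b then none else G.att h) else none }

/-- `G_b`: subdivide the edge `b` by one new bivalent vertex `u`,
splitting `b` into the two edges `{b, n₁}` and `{n₂, ι b}`. -/
def subdiv (G : HGraph) (b u n₁ n₂ : ℕ) : HGraph :=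
  let H' := insert n₁ (insert n₂ G.H)
  { V := insert u G.V
    H := H'
    ι := fun h => if h ∈ H' then
        (if h = b then n₁ else if h = n₁ then b else
         if h = n₂ then (if G.ι b = b then n₂ else G.ι b) else
         if h = G.ι b then n₂ else G.ι h) else h
    att := fun h => if h ∈ H' then (if h = n₁ ∨ h = n₂ then some u else G.att h) else none }

/-- Validity of the data of a subdivision: `b` is an edge and the new names are fresh. -/
def IsDegen (G : HGraph) (b u n₁ n₂ : ℕ) : Prop :=
  b ∈ G.H ∧ u ∉ G.V ∧ n₁ ∉ G.H ∧ n₂ ∉ G.H ∧ n₁ ≠ n₂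

end HGraph

/-- The data of a graphical map: a map on half-edges (inducing the map `f₀` on
edges) and, for each vertex, an embedded subgraph of the target
(its vertex set together with its set of half-edges). -/
structure PreGMap where
  e : ℕ → ℕ
  vimg : ℕ → Finset ℕ × Finset ℕ

/-- Composition of graphical maps: compose on edges; the embedded subgraph at a
vertex is assembled by substituting the images of the vertices of its image. -/
def PreGMap.comp (g f : PreGMap) : PreGMap where
  e := g.e ∘ f.e
  vimg := fun v =>
    ((f.vimg v).1.biUnion fun w => (g.vimg w).1,
     (f.vimg v).2.image g.e ∪ (f.vimg v).1.biUnion fun w => (g.vimg w).2)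

/-- Equality of graphical maps out of `G` (extensional equality of `f₀` and `f₁`). -/
def PreGMap.EqOn (G : HGraph) (f g : PreGMap) : Prop :=
  (∀ h ∈ G.H, f.e h = g.e h) ∧ ∀ v ∈ G.V, f.vimg v = g.vimg v

namespace HGraph

/-- The identity graphical map of `G`. -/
def idMap (G : HGraph) : PreGMap := ⟨id, G.corolla⟩

/-- The inner coface map `δ^b : G/b → G`: identity on edges, sending the merged
vertex to the embedded barbell subgraph of `G` around `b`, and every other
vertex to its corolla. -/
def innerCoface (G : HGraph) (b : ℕ) : PreGMap :=
  let x := (G.att b).getD 0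
  let y := (G.att (G.ι b)).getD 0
  { e := id
    vimg := fun v => if v = min x y then
        ({x, y}, G.H.filter fun h =>
          G.att h = some x ∨ G.att h = some y ∨
          G.att (G.ι h) = some x ∨ G.att (G.ι h) = some y)
      else G.corolla v }

/-- The outer coface map `δ^v : G/v → G`: identity on edges, every vertex to its corolla. -/
def outerCoface (G : HGraph) (_v : ℕ) : PreGMap := ⟨id, G.corolla⟩

/-- The cosnip map `δ^ℓ : G/ℓ → G`: both new legs are sent to the loop `l`,
identity on vertices. -/
def cosnip (G : HGraph) (l a b : ℕ) : PreGMap :=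
  { e := fun h => if h = a then G.ι l else if h = b then l else h
    vimg := G.corolla }

/-- The codegeneracy map `σ^b : G_b → G`: the two halves of the subdivided edge
are sent to `b`, the new bivalent vertex to the edge graph `η_b`, and every
other vertex to its corolla. -/
def codegeneracy (G : HGraph) (b u n₁ n₂ : ℕ) : PreGMap :=
  { e := fun h => if h = n₁ then G.ι b else if h = n₂ then b else h
    vimg := fun v => if v = u then ((∅ : Finset ℕ), ({b, G.ι b} : Finset ℕ))
      else G.corolla v }

/-- The conditions for `f` to be a graphical map `G → G'`: it maps edges to
edges, each vertex to an embedded subgraph of `G'`, the vertex sets of the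
images are disjoint and together exhaust the vertices of `G'`, and boundaries
match: each half-edge at `v` is sent into the subgraph at `v`. -/
def IsGMap (G G' : HGraph) (f : PreGMap) : Prop :=
  (∀ h ∈ G.H, f.e h ∈ G'.H ∧ (f.e (G.ι h) = f.e h ∨ f.e (G.ι h) = G'.ι (f.e h))) ∧
  (∀ v ∈ G.V, (f.vimg v).1 ⊆ G'.V ∧ (f.vimg v).2 ⊆ G'.H) ∧
  (∀ v ∈ G.V, ∀ w ∈ G.V, v ≠ w → Disjoint (f.vimg v).1 (f.vimg w).1) ∧
  G.V.biUnion (fun v => (f.vimg v).1) = G'.V ∧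
  (∀ v ∈ G.V, ∀ h ∈ G.H, G.att h = some v → f.e h ∈ (f.vimg v).2)

end HGraph

/-- The three kinds of coface maps: inner cofaces, outer cofaces, and cosnips. -/
inductive CofaceKind where
  | inner (e : ℕ)
  | outer (v : ℕ)
  | snip (l a b : ℕ)

namespace HGraph

/-- The source of the coface map of kind `k` into `G`. -/
def cofaceSource (G : HGraph) : CofaceKind → HGraph
  | .inner e => G.contract e
  | .outer v => G.delVertex v
  | .snip l a b => G.snip l a b

/-- The coface map of kind `k` into `G`. -/
def cofaceMap (G : HGraph) : CofaceKind → PreGMap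
  | .inner e => G.innerCoface e
  | .outer v => G.outerCoface v
  | .snip l a b => G.cosnip l a b

/-- Validity of a coface map into `G`: inner cofaces contract non-loop inner
edges, outer cofaces delete outer vertices, cosnips snip loops (with fresh
names, leaving the graph connected). -/
def IsCoface (G : HGraph) : CofaceKind → Prop
  | .inner e => G.IsInnerEdge e ∧ ¬ G.IsLoop e
  | .outer v => G.IsOuterVertex v
  | .snip l a b => G.IsLoop l ∧ a ∉ G.H ∧ b ∉ G.H ∧ a ≠ b ∧ (G.snip l a b).Connected

end HGraph

/-- `CofaceSeq G₁ G₂ f`: `f : G₁ → G₂` is a composite of a sequence of coface maps. -/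
inductive CofaceSeq : HGraph → HGraph → PreGMap → Prop where
  | nil (G : HGraph) : CofaceSeq G G G.idMap
  | cons {G₁ G₂ : HGraph} {f : PreGMap} (k : CofaceKind) (hk : G₂.IsCoface k)
      (h : CofaceSeq G₁ (G₂.cofaceSource k) f) :
      CofaceSeq G₁ G₂ ((G₂.cofaceMap k).comp f)

/-- `DegenSeq G₁ G₂ f`: `f : G₁ → G₂` is a composite of a sequence of codegeneracy maps. -/
inductive DegenSeq : HGraph → HGraph → PreGMap → Prop where
  | nil (G : HGraph) : DegenSeq G G G.idMap
  | cons {G₁ G₂ : HGraph} {f : PreGMap} (b u n₁ n₂ : ℕ) (hb : G₂.IsDegen b u n₁ n₂)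
      (h : DegenSeq G₁ (G₂.subdiv b u n₁ n₂) f) :
      DegenSeq G₁ G₂ ((G₂.codegeneracy b u n₁ n₂).comp f)

/-- `ElemSeq G₁ G₂ f`: `f : G₁ → G₂` is an arbitrary composite of coface and
codegeneracy maps. -/
inductive ElemSeq : HGraph → HGraph → PreGMap → Prop where
  | nil (G : HGraph) : ElemSeq G G G.idMap
  | coface {G₁ G₂ : HGraph} {f : PreGMap} (k : CofaceKind) (hk : G₂.IsCoface k)
      (h : ElemSeq G₁ (G₂.cofaceSource k) f) :
      ElemSeq G₁ G₂ ((G₂.cofaceMap k).comp f)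
  | degen {G₁ G₂ : HGraph} {f : PreGMap} (b u n₁ n₂ : ℕ) (hb : G₂.IsDegen b u n₁ n₂)
      (h : ElemSeq G₁ (G₂.subdiv b u n₁ n₂) f) :
      ElemSeq G₁ G₂ ((G₂.codegeneracy b u n₁ n₂).comp f)

/-! Both `G/v` and `G/e` restrict `G` to a set of half-edges and relabel the attachments:
deleting `v` detaches the surviving half-edges from `v`, contracting `e` merges its two ends.
Restrictions compose, and since `e` avoids `v` the two relabellings commute and contraction
neither creates nor destroys attachments to `v`, so both orders remove the same half-edges.
The cofaces send a vertex to a corolla, or to the union of the corollas at the ends of `e`, and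
the corollas of `G/v` and `G/e` lie inside those of `G`; so both composites send each vertex
to the union of the corollas of `G` at the vertices it comes from. -/

namespace HGraph

def restrict (G : HGraph) (V S : Finset ℕ) (r : Option ℕ → Option ℕ) : HGraph where
  V := V
  H := S
  ι h := if h ∈ S then G.ι h else h
  att h := if h ∈ S then r (G.att h) else none

def detach (v : ℕ) (o : Option ℕ) : Option ℕ := if o = some v then none else o

def merge (x y : ℕ) (o : Option ℕ) : Option ℕ :=
  if o = some x ∨ o = some y then some (min x y) else o

def IsDeletedWith (G : HGraph) (v h : ℕ) : Prop :=
  (G.att h = some v ∨ G.att (G.ι h) = some v) ∧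
  (G.att h = some v ∨ G.att h = none) ∧
  (G.att (G.ι h) = some v ∨ G.att (G.ι h) = none)

instance (G : HGraph) (v : ℕ) : DecidablePred (G.IsDeletedWith v) := fun _ =>
  inferInstanceAs (Decidable (_ ∧ _ ∧ _))

theorem delVertex_eq_restrict (G : HGraph) (v : ℕ) :
    G.delVertex v =
      G.restrict (G.V.erase v) (G.H.filter fun h => ¬ G.IsDeletedWith v h) (detach v) :=
  rfl

theorem contract_eq_restrict {G : HGraph} {b x y : ℕ} (hx : G.att b = some x)
    (hy : G.att (G.ι b) = some y) :
    G.contract b =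
      G.restrict (insert (min x y) ((G.V.erase x).erase y))
        (G.H.filter fun h => h ≠ b ∧ h ≠ G.ι b) (merge x y) := by
  simp only [contract, hx, hy, Option.getD_some]
  rfl

section Restrict
variable {G : HGraph} {V S : Finset ℕ} {r : Option ℕ → Option ℕ} {h : ℕ}

@[simp] theorem restrict_V : (G.restrict V S r).V = V := rfl

@[simp] theorem restrict_H : (G.restrict V S r).H = S := rfl

theorem restrict_ι_of_mem (hh : h ∈ S) : (G.restrict V S r).ι h = G.ι h := if_pos hh

theorem restrict_att_of_mem (hh : h ∈ S) : (G.restrict V S r).att h = r (G.att h) :=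
  if_pos hh

theorem restrict_restrict {V' S' : Finset ℕ} {r' : Option ℕ → Option ℕ} (hS : S' ⊆ S) :
    (G.restrict V S r).restrict V' S' r' = G.restrict V' S' (r' ∘ r) := by
  simp only [restrict, mk.injEq, true_and]
  constructor <;> funext h <;> split_ifs with hS' hS'' <;>
    first | rfl | exact absurd (hS hS') hS''

theorem isDeletedWith_restrict_iff {v : ℕ} (hh : h ∈ S) (hιh : G.ι h ∈ S)
    (hr_some : ∀ o, r o = some v ↔ o = some v) (hr_none : ∀ o, r o = none ↔ o = none) :
    (G.restrict V S r).IsDeletedWith v h ↔ G.IsDeletedWith v h := by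
  simp only [IsDeletedWith, restrict_ι_of_mem hh, restrict_att_of_mem hh,
    restrict_att_of_mem hιh, hr_some, hr_none]

theorem corolla_restrict_subset (hS : S ⊆ G.H) {w : ℕ} (p : Option ℕ → Prop)
    [DecidablePred p] (hr : ∀ o, r o = some w → p o) :
    ((G.restrict V S r).corolla w).2 ⊆
      G.H.filter fun h => p (G.att h) ∨ p (G.att (G.ι h)) := by
  intro h hh
  obtain ⟨hhS, hatt⟩ : h ∈ S ∧ _ := Finset.mem_filter.mp hh
  refine Finset.mem_filter.mpr ⟨hS hhS, ?_⟩
  rw [restrict_ι_of_mem hhS, restrict_att_of_mem hhS] at hatt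
  rcases hatt with hatt | hatt
  · exact .inl (hr _ hatt)
  · refine .inr (hr _ ?_)
    by_cases hιh : G.ι h ∈ S
    · rwa [restrict_att_of_mem hιh] at hatt
    · simp [restrict, hιh] at hatt

end Restrict

section Relabel
variable {v w x y : ℕ} {o : Option ℕ}

theorem detach_eq_some : detach v o = some w → o = some w := by
  unfold detach; split_ifs <;> simp

theorem merge_eq_none_iff : merge x y o = none ↔ o = none := by
  unfold merge; split_ifs with h
  · obtain rfl | rfl := h <;> simp
  · rfl

theorem merge_eq_some_of_ne (hw : w ≠ min x y) : merge x y o = some w → o = some w := by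
  unfold merge; split_ifs <;> simp [Ne.symm hw]

theorem merge_eq_some_min : merge x y o = some (min x y) → o = some x ∨ o = some y := by
  unfold merge
  split_ifs with h
  · exact fun _ => h
  · rintro rfl; rcases min_choice x y with hm | hm <;> simp [hm]

theorem merge_eq_some_iff_of_ne (hxv : x ≠ v) (hyv : y ≠ v) :
    merge x y o = some v ↔ o = some v := by
  refine ⟨merge_eq_some_of_ne (min_rec' (· ≠ v) hxv hyv).symm, ?_⟩
  rintro rfl; simp [merge, hxv.symm, hyv.symm]

theorem detach_comp_merge (hxv : x ≠ v) (hyv : y ≠ v) :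
    detach v ∘ merge x y = merge x y ∘ detach v := by
  funext o
  by_cases hv : o = some v
  · subst hv; simp [detach, merge, hxv.symm, hyv.symm]
  · have hdo : detach v o = o := if_neg hv
    simp only [Function.comp, hdo, merge]
    split_ifs <;> simp [detach, min_rec' (· ≠ v) hxv hyv, hv]

end Relabel

section DelVertex
variable {G : HGraph} {v h x : ℕ}

theorem mem_filter_not_isDeletedWith (hh : h ∈ G.H) (hx : G.att h = some x) (hxv : x ≠ v) :
    h ∈ G.H.filter fun h => ¬ G.IsDeletedWith v h :=
  Finset.mem_filter.mpr ⟨hh, by simp [IsDeletedWith, hx, hxv]⟩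

theorem delVertex_ι_of_att (hh : h ∈ G.H) (hx : G.att h = some x) (hxv : x ≠ v) :
    (G.delVertex v).ι h = G.ι h := by
  rw [delVertex_eq_restrict, restrict_ι_of_mem (mem_filter_not_isDeletedWith hh hx hxv)]

theorem delVertex_att_of_att (hh : h ∈ G.H) (hx : G.att h = some x) (hxv : x ≠ v) :
    (G.delVertex v).att h = some x := by
  rw [delVertex_eq_restrict, restrict_att_of_mem (mem_filter_not_isDeletedWith hh hx hxv), hx]
  exact if_neg (by simpa using hxv)

theorem corolla_delVertex_subset (w : ℕ) : ((G.delVertex v).corolla w).2 ⊆ (G.corolla w).2 :=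
  corolla_restrict_subset (Finset.filter_subset _ _) (· = some w) fun _ => detach_eq_some

end DelVertex

section Contract
variable {G : HGraph} {b x y : ℕ}

theorem corolla_contract_subset (hx : G.att b = some x) (hy : G.att (G.ι b) = some y) {w : ℕ}
    (hw : w ≠ min x y) : ((G.contract b).corolla w).2 ⊆ (G.corolla w).2 := by
  rw [contract_eq_restrict hx hy]
  exact corolla_restrict_subset (Finset.filter_subset _ _) (· = some w)
    fun _ => merge_eq_some_of_ne hw

theorem corolla_contract_min_subset (hx : G.att b = some x) (hy : G.att (G.ι b) = some y) :
    ((G.contract b).corolla (min x y)).2 ⊆ (G.corolla x).2 ∪ (G.corolla y).2 := by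
  rw [contract_eq_restrict hx hy]
  refine (corolla_restrict_subset (Finset.filter_subset _ _) (fun o => o = some x ∨ o = some y)
    fun _ => merge_eq_some_min).trans fun h hh => ?_
  simp only [corolla, Finset.mem_union, Finset.mem_filter] at hh ⊢
  tauto

theorem innerCoface_vimg_min (hx : G.att b = some x) (hy : G.att (G.ι b) = some y) :
    (G.innerCoface b).vimg (min x y) = ({x, y}, (G.corolla x).2 ∪ (G.corolla y).2) := by
  simp only [innerCoface, hx, hy, Option.getD_some, if_true, corolla, Prod.mk.injEq, true_and]
  ext h
  simp only [Finset.mem_union, Finset.mem_filter]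
  tauto

theorem innerCoface_vimg_of_ne (hx : G.att b = some x) (hy : G.att (G.ι b) = some y) {w : ℕ}
    (hw : w ≠ min x y) : (G.innerCoface b).vimg w = G.corolla w := by
  simp only [innerCoface, hx, hy, Option.getD_some, if_neg hw]

end Contract

theorem outerCoface_comp_vimg (G : HGraph) (v : ℕ) (f : PreGMap) (w : ℕ) :
    ((G.outerCoface v).comp f).vimg w =
      ((f.vimg w).1, (f.vimg w).2 ∪ (f.vimg w).1.biUnion fun u => (G.corolla u).2) := by
  simp [PreGMap.comp, outerCoface, corolla]

theorem comp_outerCoface_vimg {g : PreGMap} (hg : g.e = id) (G : HGraph) (v w : ℕ) :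
    (g.comp (G.outerCoface v)).vimg w = ((g.vimg w).1, (G.corolla w).2 ∪ (g.vimg w).2) := by
  simp [PreGMap.comp, outerCoface, hg, corolla]

section InnerOuter
variable {G : HGraph} {v e x y : ℕ}

theorem contract_delVertex_eq (hιH : ∀ h ∈ G.H, G.ι h ∈ G.H) (heH : e ∈ G.H)
    (hx : G.att e = some x) (hy : G.att (G.ι e) = some y) (hxv : x ≠ v) (hyv : y ≠ v) :
    (G.delVertex v).contract e =
      G.restrict (insert (min x y) (((G.V.erase v).erase x).erase y))
        ((G.H.filter fun h => ¬ G.IsDeletedWith v h).filter fun h => h ≠ e ∧ h ≠ G.ι e)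
        (merge x y ∘ detach v) := by
  rw [contract_eq_restrict (delVertex_att_of_att heH hx hxv)
      ((delVertex_ι_of_att heH hx hxv).symm ▸ delVertex_att_of_att (hιH e heH) hy hyv),
    delVertex_ι_of_att heH hx hxv, delVertex_eq_restrict, restrict_V, restrict_H,
    restrict_restrict (Finset.filter_subset _ _)]

theorem delVertex_contract_eq (hιH : ∀ h ∈ G.H, G.ι h ∈ G.H)
    (hιι : ∀ h ∈ G.H, G.ι (G.ι h) = h) (heH : e ∈ G.H) (hx : G.att e = some x)
    (hy : G.att (G.ι e) = some y) (hxv : x ≠ v) (hyv : y ≠ v) :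
    (G.contract e).delVertex v =
      G.restrict ((insert (min x y) ((G.V.erase x).erase y)).erase v)
        ((G.H.filter fun h => h ≠ e ∧ h ≠ G.ι e).filter fun h => ¬ G.IsDeletedWith v h)
        (detach v ∘ merge x y) := by
  rw [contract_eq_restrict hx hy, delVertex_eq_restrict, restrict_V, restrict_H,
    restrict_restrict (Finset.filter_subset _ _)]
  congr 1
  refine Finset.filter_congr fun h hh => ?_
  obtain ⟨hhH, hhe, hhιe⟩ := Finset.mem_filter.mp hh
  have hιh : G.ι h ∈ G.H.filter fun h => h ≠ e ∧ h ≠ G.ι e := by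
    refine Finset.mem_filter.mpr ⟨hιH h hhH, fun hιhe => hhιe ?_, fun hιhιe => hhe ?_⟩
    · rw [← hιhe, hιι h hhH]
    · rw [← hιι h hhH, hιhιe, hιι e heH]
  rw [isDeletedWith_restrict_iff hh hιh (fun _ => merge_eq_some_iff_of_ne hxv hyv)
    (fun _ => merge_eq_none_iff)]

theorem delVertex_contract_comm (hιH : ∀ h ∈ G.H, G.ι h ∈ G.H)
    (hιι : ∀ h ∈ G.H, G.ι (G.ι h) = h) (heH : e ∈ G.H) (hx : G.att e = some x)
    (hy : G.att (G.ι e) = some y) (hxv : x ≠ v) (hyv : y ≠ v) :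
    (G.delVertex v).contract e = (G.contract e).delVertex v := by
  rw [contract_delVertex_eq hιH heH hx hy hxv hyv,
    delVertex_contract_eq hιH hιι heH hx hy hxv hyv, detach_comp_merge hxv hyv,
    Finset.erase_insert_of_ne (min_rec' (· ≠ v) hxv hyv),
    Finset.erase_right_comm (a := y) (b := v), Finset.erase_right_comm (a := x) (b := v),
    Finset.filter_filter, Finset.filter_filter]
  simp only [and_comm]

theorem outerCoface_comp_innerCoface_vimg (hιH : ∀ h ∈ G.H, G.ι h ∈ G.H) (heH : e ∈ G.H)
    (hx : G.att e = some x) (hy : G.att (G.ι e) = some y) (hxv : x ≠ v) (hyv : y ≠ v)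
    (w : ℕ) :
    ((G.outerCoface v).comp ((G.delVertex v).innerCoface e)).vimg w =
      ((G.innerCoface e).comp ((G.contract e).outerCoface v)).vimg w := by
  have hDx := delVertex_att_of_att heH hx hxv
  have hDy : (G.delVertex v).att ((G.delVertex v).ι e) = some y := by
    rw [delVertex_ι_of_att heH hx hxv]; exact delVertex_att_of_att (hιH e heH) hy hyv
  rw [outerCoface_comp_vimg, comp_outerCoface_vimg rfl]
  by_cases hw : w = min x y
  · subst hw
    rw [innerCoface_vimg_min hDx hDy, innerCoface_vimg_min hx hy, Finset.biUnion_insert,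
      Finset.singleton_biUnion, Finset.union_eq_right.mpr (Finset.union_subset_union
        (corolla_delVertex_subset x) (corolla_delVertex_subset y)),
      Finset.union_eq_right.mpr (corolla_contract_min_subset hx hy)]
  · rw [innerCoface_vimg_of_ne hDx hDy hw, innerCoface_vimg_of_ne hx hy hw]
    change (({w} : Finset ℕ), _ ∪ ({w} : Finset ℕ).biUnion _) = ({w}, _)
    rw [Finset.singleton_biUnion, Finset.union_eq_right.mpr (corolla_delVertex_subset w),
      Finset.union_eq_right.mpr (corolla_contract_subset hx hy hw)]

end InnerOuter

end HGraph

theorem inner_outer_cofaces_commute_general (G : HGraph) (hG : G.Wf) (v e : ℕ)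
    (he : G.IsInnerEdge e)
    (hadj : G.att e ≠ some v ∧ G.att (G.ι e) ≠ some v) :
    (G.delVertex v).contract e = (G.contract e).delVertex v ∧
    PreGMap.EqOn ((G.delVertex v).contract e)
      ((G.outerCoface v).comp ((G.delVertex v).innerCoface e))
      ((G.innerCoface e).comp ((G.contract e).outerCoface v)) := by
  obtain ⟨hιH, hιι, -, -⟩ := hG
  obtain ⟨heH, -, hxs, hys⟩ := he
  obtain ⟨x, hx⟩ := Option.isSome_iff_exists.mp hxs
  obtain ⟨y, hy⟩ := Option.isSome_iff_exists.mp hys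
  have hxv : x ≠ v := fun hxv => hadj.1 (hxv ▸ hx)
  have hyv : y ≠ v := fun hyv => hadj.2 (hyv ▸ hy)
  exact ⟨HGraph.delVertex_contract_comm hιH hιι heH hx hy hxv hyv, fun _ _ => rfl,
    fun w _ => HGraph.outerCoface_comp_innerCoface_vimg hιH heH hx hy hxv hyv w⟩

/-- For an outer vertex `v` and a (non-loop) inner edge `e`
of `G` not adjacent to `v`, one has `(G/v)/e = (G/e)/v` and the mixed square
commutes: `δ^v ∘ δ^e = δ^e ∘ δ^v` as graphical maps `(G/v)/e → G`. -/
theorem inner_outer_cofaces_commute (G : HGraph) (hG : G.Wf) (v e : ℕ)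
    (hv : G.IsOuterVertex v) (he : G.IsInnerEdge e) (hl : ¬ G.IsLoop e)
    (hadj : G.att e ≠ some v ∧ G.att (G.ι e) ≠ some v) :
    (G.delVertex v).contract e = (G.contract e).delVertex v ∧
    PreGMap.EqOn ((G.delVertex v).contract e)
      ((G.outerCoface v).comp ((G.delVertex v).innerCoface e))
      ((G.innerCoface e).comp ((G.contract e).outerCoface v)) :=
  inner_outer_cofaces_commute_general G hG v e he hadj
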